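/- arXiv:1604.01296 — 6 statements merged into one kernel-verified Lean document; each statement's English description precedes it below -/
import Mathlib

section
/- Let (X,d) be a metric space and {x_n}_{n≥0} a sequence in X with d(x_n, x_{n+1}) → 0 as n → ∞. Suppose that for every ε > 0 there exists a sequence {ν_n} of nonnegative integers such that for any two subsequences {x_{p_n}} and {x_{q_n}} (given by strictly increasing index maps n ↦ p_n and n ↦ q_n), if limsup_{n→∞} d(x_{p_n}, x_{q_n}) ≤ ε then there exists N such that d(x_{p_n+ν_n}, x_{q_n+ν_n}) ≤ ε for all n ≥ N. Then {x_n} is a Cauchy sequence. -/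
/-!
If `x` is not Cauchy, then for some `ε₀ > 0` every `x N` is followed by a point at distance
`≥ ε₀`. Take `ε = ε₀ / 2` and its shifts `ν`. Given a small `η`, late enough the steps of `x` are
shorter than `η`, so a shift by `s = ν n` moves each point by at most `sη`, and walking from `x u`
until the first exit from the ball of radius `ε + 2sη` gives an index `b` with
`ε + 2sη < d(x u, x b) < ε + (2s + 1)η`. After the shift the pair is still more than `ε` apart.
Letting `η → 0` along `n` and choosing the pairs increasingly yields subsequences `p, q` with
`limsup d(x (p n), x (q n)) ≤ ε` but `d(x (p n + ν n), x (q n + ν n)) > ε` for every `n`.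
-/

open Filter Topology

section StepBounds

variable {X : Type*} [PseudoMetricSpace X] {x : ℕ → X}

theorem dist_add_le_mul_of_dist_succ_le {M a : ℕ} {η : ℝ}
    (hstep : ∀ i ≥ M, dist (x i) (x (i + 1)) ≤ η) (ha : M ≤ a) (s : ℕ) :
    dist (x a) (x (a + s)) ≤ s * η := by
  calc dist (x a) (x (a + s)) ≤ ∑ _i ∈ Finset.Ico a (a + s), η :=
        dist_le_Ico_sum_of_dist_le (by omega) fun hk _ => hstep _ (ha.trans hk)
    _ = s * η := by simp

theorem exists_lt_dist_lt_add_of_dist_succ_lt {u : ℕ} {c η : ℝ} (hc : 0 ≤ c)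
    (hstep : ∀ i ≥ u, dist (x i) (x (i + 1)) < η) (hfar : ∃ k, c < dist (x u) (x (u + k))) :
    ∃ b, u < b ∧ c < dist (x u) (x b) ∧ dist (x u) (x b) < c + η := by
  classical
  have hk : Nat.find hfar ≠ 0 := fun h0 => by
    have := Nat.find_spec hfar
    rw [h0, add_zero, dist_self] at this
    linarith
  obtain ⟨k, hk⟩ := Nat.exists_eq_succ_of_ne_zero hk
  have hexit := Nat.find_spec hfar
  have hinside : dist (x u) (x (u + k)) ≤ c := not_lt.mp (Nat.find_min hfar (by omega))
  rw [hk] at hexit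
  refine ⟨u + (k + 1), by omega, hexit, ?_⟩
  calc dist (x u) (x (u + (k + 1))) ≤ dist (x u) (x (u + k)) + dist (x (u + k)) (x (u + k + 1)) :=
        dist_triangle _ _ _
    _ < c + η := add_lt_add_of_le_of_lt hinside (hstep _ (Nat.le_add_right u k))

theorem exists_dist_le_add_lt_dist_add_of_dist_succ_tendsto_zero
    (hd : Tendsto (fun n => dist (x n) (x (n + 1))) atTop (𝓝 0)) {ε ε₀ δ : ℝ}
    (hε : 0 ≤ ε) (hεε₀ : ε < ε₀) (hδ : 0 < δ) (hfar : ∀ N, ∃ n ≥ N, ε₀ ≤ dist (x n) (x N))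
    (s B : ℕ) :
    ∃ a b, B < a ∧ a < b ∧ dist (x a) (x b) ≤ ε + δ ∧ ε < dist (x (a + s)) (x (b + s)) := by
  set η := min (ε₀ - ε) δ / (2 * s + 2) with hη_def
  have hη : 0 < η := div_pos (lt_min (sub_pos.2 hεε₀) hδ) (by positivity)
  have hmul : (2 * s + 2) * η = min (ε₀ - ε) δ := by rw [hη_def]; field_simp
  have hradius : ε + 2 * s * η < ε₀ := by linarith [min_le_left (ε₀ - ε) δ]
  have hwidth : ε + 2 * s * η + η ≤ ε + δ := by linarith [min_le_right (ε₀ - ε) δ]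
  obtain ⟨M, hM⟩ := eventually_atTop.mp (hd.eventually_lt_const hη)
  set u := max (B + 1) M
  have hMu : M ≤ u := le_max_right _ _
  obtain ⟨v, huv, hv⟩ := hfar u
  have hfar_u : ∃ k, ε + 2 * s * η < dist (x u) (x (u + k)) :=
    ⟨v - u, by rw [Nat.add_sub_cancel' huv, dist_comm]; linarith⟩
  obtain ⟨b, hub, hb_gt, hb_lt⟩ := exists_lt_dist_lt_add_of_dist_succ_lt (by positivity)
    (fun i hi => hM i (hMu.trans hi)) hfar_u
  have hstep : ∀ i ≥ M, dist (x i) (x (i + 1)) ≤ η := fun i hi => (hM i hi).le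
  have hshift_u := dist_add_le_mul_of_dist_succ_le hstep hMu s
  have hshift_b := dist_add_le_mul_of_dist_succ_le hstep (hMu.trans hub.le) s
  refine ⟨u, b, by omega, hub, by linarith, ?_⟩
  have := dist_triangle4 (x u) (x (u + s)) (x (b + s)) (x b)
  rw [dist_comm (x (b + s))] at this
  linarith

end StepBounds

theorem limsup_le_of_le_add_of_tendsto_zero {f δ : ℕ → ℝ} {ε : ℝ} (hf : ∀ n, 0 ≤ f n)
    (hle : ∀ n, f n ≤ ε + δ n) (hδ : Tendsto δ atTop (𝓝 0)) : limsup f atTop ≤ ε := by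
  refine le_of_forall_pos_le_add fun η hη => limsup_le_of_le (isCoboundedUnder_le_of_le atTop hf) ?_
  filter_upwards [hδ.eventually_le_const hη] with n hn
  linarith [hle n]

theorem exists_strictMono_pair {P : ℕ → ℕ → ℕ → Prop}
    (h : ∀ n B, ∃ a b, B < a ∧ a < b ∧ P n a b) :
    ∃ p q : ℕ → ℕ, StrictMono p ∧ StrictMono q ∧ ∀ n, P n (p n) (q n) := by
  choose a b hBa hab hP using h
  let bound : ℕ → ℕ := fun n => Nat.rec 0 (fun k r => b k r) n
  have hbound : ∀ n, bound (n + 1) = b n (bound n) := fun _ => rfl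
  refine ⟨fun n => a n (bound n), fun n => b n (bound n), ?_, ?_, fun n => hP n _⟩
  · refine strictMono_nat_of_lt_succ fun n => ?_
    calc a n (bound n) < bound (n + 1) := by rw [hbound]; exact hab _ _
      _ < a (n + 1) (bound (n + 1)) := hBa _ _
  · refine strictMono_nat_of_lt_succ fun n => ?_
    calc b n (bound n) = bound (n + 1) := (hbound n).symm
      _ < a (n + 1) (bound (n + 1)) := hBa _ _
      _ < b (n + 1) (bound (n + 1)) := hab _ _

/-- Lemma 2.1 (technical lemma): a criterion for a sequence in a metric space to be Cauchy. -/
theorem stmt0 {X : Type*} [MetricSpace X] (x : ℕ → X)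
    (hd : Tendsto (fun n => dist (x n) (x (n + 1))) atTop (nhds 0))
    (h : ∀ ε : ℝ, 0 < ε → ∃ ν : ℕ → ℕ,
      ∀ p q : ℕ → ℕ, StrictMono p → StrictMono q →
        limsup (fun n => dist (x (p n)) (x (q n))) atTop ≤ ε →
        ∃ N : ℕ, ∀ n ≥ N, dist (x (p n + ν n)) (x (q n + ν n)) ≤ ε) :
    CauchySeq x := by
  rw [Metric.cauchySeq_iff']
  by_contra! hnot
  obtain ⟨ε₀, hε₀, hfar⟩ := hnot
  obtain ⟨ν, hν⟩ := h (ε₀ / 2) (by positivity)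
  obtain ⟨p, q, hp, hq, hpq⟩ := exists_strictMono_pair fun n B =>
    exists_dist_le_add_lt_dist_add_of_dist_succ_tendsto_zero hd (by positivity)
      (half_lt_self hε₀) (Nat.one_div_pos_of_nat (n := n)) hfar (ν n) B
  have hlimsup : limsup (fun n => dist (x (p n)) (x (q n))) atTop ≤ ε₀ / 2 :=
    limsup_le_of_le_add_of_tendsto_zero (fun _ => dist_nonneg) (fun n => (hpq n).1)
      tendsto_one_div_add_atTop_nhds_zero_nat
  obtain ⟨N, hN⟩ := hν p q hp hq hlimsup
  exact (hN N le_rfl).not_gt (hpq N).2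
end

section
/- Let (X,d) be a metric space, {x_n}_{n≥0} a sequence in X with d(x_n, x_{n+1}) → 0, and m : X × X → [0,∞) a function such that for any two subsequences {x_{p_n}} and {x_{q_n}}, limsup_{n→∞} m(x_{p_n}, x_{q_n}) ≤ limsup_{n→∞} d(x_{p_n}, x_{q_n}). If for every ε > 0 and any two subsequences {x_{p_n}} and {x_{q_n}} with limsup_{n→∞} m(x_{p_n}, x_{q_n}) ≤ ε there exists N such that d(x_{p_n}, x_{q_n}) ≤ ε for all n ≥ N, then {x_n} is a Cauchy sequence. -/
open Filter

/-- Corollary 2.4 (i). -/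
theorem stmt2 {X : Type*} [MetricSpace X] (x : ℕ → X) (m : X → X → ℝ)
    (hm0 : ∀ a b : X, 0 ≤ m a b)
    (hm : ∀ p q : ℕ → ℕ, StrictMono p → StrictMono q →
      limsup (fun n => m (x (p n)) (x (q n))) atTop ≤
      limsup (fun n => dist (x (p n)) (x (q n))) atTop)
    (hd : Tendsto (fun n => dist (x n) (x (n + 1))) atTop (nhds 0))
    (h : ∀ ε : ℝ, 0 < ε → ∀ p q : ℕ → ℕ, StrictMono p → StrictMono q →
        limsup (fun n => m (x (p n)) (x (q n))) atTop ≤ ε →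
        ∃ N : ℕ, ∀ n ≥ N, dist (x (p n)) (x (q n)) ≤ ε) :
    CauchySeq x := by
  classical
  by_contra hC
  rw [Metric.cauchySeq_iff] at hC
  push_neg at hC
  obtain ⟨ε, hε, hC⟩ := hC
  set δ := ε / 2 with hδdef
  have hδ : 0 < δ := by positivity
  have key : ∀ N : ℕ, ∃ qp : ℕ × ℕ, N ≤ qp.1 ∧ qp.1 < qp.2 ∧
      δ < dist (x qp.2) (x qp.1) ∧
      ∀ j, qp.1 < j → j < qp.2 → dist (x j) (x qp.1) ≤ δ := by
    intro N
    obtain ⟨a, ha, b, hb, hab⟩ := hC N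
    have hne : a ≠ b := by
      rintro rfl; simp at hab; linarith
    have hqM : min a b < max a b := min_lt_max.2 hne
    have hdistM : δ < dist (x (max a b)) (x (min a b)) := by
      have hh : dist (x (max a b)) (x (min a b)) = dist (x a) (x b) := by
        rcases le_total a b with hle | hle
        · simp [min_eq_left hle, max_eq_right hle, dist_comm]
        · simp [min_eq_right hle, max_eq_left hle]
      rw [hh]; linarith
    have hex : ∃ c, min a b < c ∧ δ < dist (x c) (x (min a b)) := ⟨_, hqM, hdistM⟩
    refine ⟨(min a b, Nat.find hex), le_min ha hb, (Nat.find_spec hex).1,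
      (Nat.find_spec hex).2, ?_⟩
    intro j hj1 hj2
    have := Nat.find_min hex hj2
    push_neg at this
    exact this hj1
  choose step h1 h2 h3 h4 using key
  set F : ℕ → ℕ × ℕ := fun k => Nat.rec (step 0) (fun _ ih => step (ih.2 + 1)) k with hF
  set p : ℕ → ℕ := fun k => (F k).2 with hp
  set q : ℕ → ℕ := fun k => (F k).1 with hq
  have hFform : ∀ k, ∃ N, F k = step N := by
    intro k; cases k with
    | zero => exact ⟨0, rfl⟩
    | succ n => exact ⟨(F n).2 + 1, rfl⟩
  have hqp : ∀ k, q k < p k := by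
    intro k; obtain ⟨N, hN⟩ := hFform k
    simp only [hp, hq, hN]; exact h2 N
  have hgt : ∀ k, δ < dist (x (p k)) (x (q k)) := by
    intro k; obtain ⟨N, hN⟩ := hFform k
    simp only [hp, hq, hN]; exact h3 N
  have hmin : ∀ k, ∀ j, q k < j → j < p k → dist (x j) (x (q k)) ≤ δ := by
    intro k; obtain ⟨N, hN⟩ := hFform k
    simp only [hp, hq, hN]; exact h4 N
  have hsucc : ∀ k, p k + 1 ≤ q (k + 1) := by
    intro k
    have : F (k + 1) = step ((F k).2 + 1) := rfl
    simp only [hp, hq, this]; exact h1 _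
  have hpq : StrictMono q := by
    apply strictMono_nat_of_lt_succ
    intro k
    have := hsucc k
    have := hqp k
    omega
  have hpm : StrictMono p := by
    apply strictMono_nat_of_lt_succ
    intro k
    have := hsucc k
    have := hqp (k + 1)
    omega
  -- the distance bound via minimality
  have hbound : ∀ k, dist (x (p k)) (x (q k)) ≤ δ + dist (x (p k - 1)) (x (p k)) := by
    intro k
    have hk1 : q k ≤ p k - 1 := by have := hqp k; omega
    have htri : dist (x (p k)) (x (q k)) ≤
        dist (x (p k)) (x (p k - 1)) + dist (x (p k - 1)) (x (q k)) := dist_triangle _ _ _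
    have hle : dist (x (p k - 1)) (x (q k)) ≤ δ := by
      rcases eq_or_lt_of_le hk1 with heq | hlt
      · rw [← heq]; simp [hδ.le]
      · exact hmin k _ hlt (by have := hqp k; omega)
    calc dist (x (p k)) (x (q k)) ≤ dist (x (p k)) (x (p k - 1)) + dist (x (p k - 1)) (x (q k)) :=
          htri
      _ ≤ dist (x (p k)) (x (p k - 1)) + δ := by linarith
      _ = δ + dist (x (p k - 1)) (x (p k)) := by rw [dist_comm]; ring
  -- dist (x (p k - 1)) (x (p k)) → 0
  have hg0 : Tendsto (fun k => dist (x (p k - 1)) (x (p k))) atTop (nhds 0) := by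
    have hcomp : (fun k => dist (x (p k - 1)) (x (p k))) =
        (fun n => dist (x n) (x (n + 1))) ∘ (fun k => p k - 1) := by
      funext k
      have : p k - 1 + 1 = p k := by have := hqp k; omega
      simp [Function.comp, this]
    rw [hcomp]
    apply hd.comp
    apply tendsto_atTop_mono (f := fun k => k - 1)
    · intro k
      exact Nat.sub_le_sub_right (hpm.le_apply) 1
    · exact tendsto_sub_atTop_nat 1
  -- limsup dist ≤ δ
  have hlim : limsup (fun n => dist (x (p n)) (x (q n))) atTop ≤ δ := by
    have hδg : Tendsto (fun k => δ + dist (x (p k - 1)) (x (p k))) atTop (nhds δ) := by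
      simpa using tendsto_const_nhds.add hg0
    have heq : limsup (fun k => δ + dist (x (p k - 1)) (x (p k))) atTop = δ :=
      hδg.limsup_eq
    calc limsup (fun n => dist (x (p n)) (x (q n))) atTop
        ≤ limsup (fun k => δ + dist (x (p k - 1)) (x (p k))) atTop := by
          exact limsup_le_limsup (Eventually.of_forall hbound)
            (isCoboundedUnder_le_of_le atTop (fun k => (hgt k).le))
            hδg.isBoundedUnder_le
      _ = δ := heq
  have hmlim := le_trans (hm p q hpm hpq) hlim
  obtain ⟨N, hN⟩ := h δ hδ p q hpm hpq hmlim
  have := hN N le_rfl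
  have := hgt N
  linarith
end

section
/- Let (X,d) be a metric space, {x_n}_{n≥0} a sequence in X with d(x_n, x_{n+1}) → 0, and m : X × X → [0,∞) a function such that for any two subsequences {x_{p_n}} and {x_{q_n}}, limsup_{n→∞} m(x_{p_n}, x_{q_n}) ≤ limsup_{n→∞} d(x_{p_n}, x_{q_n}). If for every ε > 0 and any two subsequences {x_{p_n}} and {x_{q_n}} with limsup_{n→∞} m(x_{p_n}, x_{q_n}) ≤ ε there exists N such that d(x_{p_n+1}, x_{q_n+1}) ≤ ε for all n ≥ N, then {x_n} is a Cauchy sequence. -/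
open Filter

/-- Corollary 2.4 (ii). -/
theorem stmt3 {X : Type*} [MetricSpace X] (x : ℕ → X) (m : X → X → ℝ)
    (hm0 : ∀ a b : X, 0 ≤ m a b)
    (hm : ∀ p q : ℕ → ℕ, StrictMono p → StrictMono q →
      limsup (fun n => m (x (p n)) (x (q n))) atTop ≤
      limsup (fun n => dist (x (p n)) (x (q n))) atTop)
    (hd : Tendsto (fun n => dist (x n) (x (n + 1))) atTop (nhds 0))
    (h : ∀ ε : ℝ, 0 < ε → ∀ p q : ℕ → ℕ, StrictMono p → StrictMono q →
        limsup (fun n => m (x (p n)) (x (q n))) atTop ≤ ε →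
        ∃ N : ℕ, ∀ n ≥ N, dist (x (p n + 1)) (x (q n + 1)) ≤ ε) :
    CauchySeq x := by
  by_contra hc
  rw [Metric.cauchySeq_iff] at hc
  push_neg at hc
  obtain ⟨ε, hε, hce⟩ := hc
  -- key step: for every N, find a < b with N ≤ a, ε/2 < d(x a, x b), d(x a, x (b-1)) ≤ ε/2
  have key : ∀ N : ℕ, ∃ a b : ℕ, N ≤ a ∧ a < b ∧ ε/2 < dist (x a) (x b) ∧
      dist (x a) (x (b - 1)) ≤ ε/2 := by
    intro N
    obtain ⟨u, hu, v, hv, huv⟩ := hce N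
    have hne : u ≠ v := by
      intro hh; rw [hh, dist_self] at huv; linarith
    -- wlog u < v
    obtain ⟨a, b, hab, haN, hbd⟩ : ∃ a b : ℕ, a < b ∧ N ≤ a ∧ ε ≤ dist (x a) (x b) := by
      rcases lt_or_gt_of_ne hne with hlt | hgt
      · exact ⟨u, v, hlt, hu, huv⟩
      · exact ⟨v, u, hgt, hv, by rwa [dist_comm]⟩
    have hex : ∃ k, a < k ∧ ε/2 < dist (x a) (x k) :=
      ⟨b, hab, lt_of_lt_of_le (by linarith) hbd⟩
    classical
    set q := Nat.find hex with hq
    obtain ⟨hq1, hq2⟩ := Nat.find_spec hex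
    refine ⟨a, q, haN, hq1, hq2, ?_⟩
    rcases eq_or_lt_of_le (Nat.succ_le_of_lt hq1) with heq | hlt
    · rw [hq, ← heq]; simp; linarith
    · have hq1' : a < q - 1 := by omega
      have := Nat.find_min hex (m := q - 1) (by omega)
      push_neg at this
      exact this hq1'
  -- recursively build the pairs
  choose A B hA hAB hgt hle using key
  let pr : ℕ → ℕ × ℕ := fun n => Nat.rec (⟨A 1, B 1⟩) (fun _ ih => ⟨A (ih.2 + 1), B (ih.2 + 1)⟩) n
  set p : ℕ → ℕ := fun n => (pr n).1 with hp
  set q : ℕ → ℕ := fun n => (pr n).2 with hqq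
  have hstep : ∀ n, p (n+1) = A (q n + 1) ∧ q (n+1) = B (q n + 1) := fun n => ⟨rfl, rfl⟩
  have hpq : ∀ n, p n < q n := by
    intro n; cases n with
    | zero => exact hAB 1
    | succ k => exact hAB _
  have hgt' : ∀ n, ε/2 < dist (x (p n)) (x (q n)) := by
    intro n; cases n with
    | zero => exact hgt 1
    | succ k => exact hgt _
  have hle' : ∀ n, dist (x (p n)) (x (q n - 1)) ≤ ε/2 := by
    intro n; cases n with
    | zero => exact hle 1
    | succ k => exact hle _
  have hp1 : ∀ n, 1 ≤ p n := by
    intro n; cases n with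
    | zero => exact hA 1
    | succ k =>
      have h1 := (hstep k).1
      have := hA (q k + 1)
      omega
  have hpmono : StrictMono p := by
    apply strictMono_nat_of_lt_succ
    intro n
    have h1 := (hstep n).1
    have h2 := hA (q n + 1)
    have := hpq n
    omega
  have hqmono : StrictMono q := by
    apply strictMono_nat_of_lt_succ
    intro n
    have h2 := hA (q n + 1)
    have h3 := hAB (q n + 1)
    have := (hstep n).1
    have := (hstep n).2
    omega
  -- shifted sequences
  set P : ℕ → ℕ := fun n => p n - 1 with hP
  set Q : ℕ → ℕ := fun n => q n - 1 with hQ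
  have hPadd : ∀ n, P n + 1 = p n := fun n => by have := hp1 n; simp [hP]; omega
  have hQadd : ∀ n, Q n + 1 = q n := fun n => by
    have := hp1 n; have := hpq n; simp [hQ]; omega
  have hPmono : StrictMono P := by
    intro a b hab
    have := hpmono hab
    have := hp1 a
    simp [hP]; omega
  have hQmono : StrictMono Q := by
    intro a b hab
    have := hqmono hab
    have h1 := hp1 a; have h2 := hpq a
    simp [hQ]; omega
  -- dist (x (P n)) (x (p n)) → 0
  have hPt : Tendsto (fun n => dist (x (P n)) (x (p n))) atTop (nhds 0) := by
    have : (fun n => dist (x (P n)) (x (p n))) =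
        (fun n => dist (x n) (x (n+1))) ∘ P := by
      funext n; simp [Function.comp, hPadd n]
    rw [this]
    exact hd.comp (hPmono.tendsto_atTop)
  -- limsup of d(x P, x Q) ≤ ε/2
  have hlimd : limsup (fun n => dist (x (P n)) (x (Q n))) atTop ≤ ε/2 := by
    have hub : ∀ n, dist (x (P n)) (x (Q n)) ≤ dist (x (P n)) (x (p n)) + ε/2 := by
      intro n
      calc dist (x (P n)) (x (Q n)) ≤ dist (x (P n)) (x (p n)) + dist (x (p n)) (x (Q n)) :=
            dist_triangle _ _ _
        _ ≤ dist (x (P n)) (x (p n)) + ε/2 := by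
            have := hle' n
            simp only [hQ]
            linarith
    refine le_of_forall_pos_le_add ?_
    intro δ hδ
    have hev : ∀ᶠ n in atTop, dist (x (P n)) (x (p n)) ≤ δ := by
      have := hPt.eventually_le_const hδ
      exact this
    have hev2 : ∀ᶠ n in atTop, dist (x (P n)) (x (Q n)) ≤ ε/2 + δ := by
      filter_upwards [hev] with n hn
      have := hub n
      linarith
    exact limsup_le_of_le (isCoboundedUnder_le_of_le atTop (fun n => dist_nonneg)) hev2
  have hlimm : limsup (fun n => m (x (P n)) (x (Q n))) atTop ≤ ε/2 :=
    le_trans (hm P Q hPmono hQmono) hlimd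
  obtain ⟨N, hN⟩ := h (ε/2) (by linarith) P Q hPmono hQmono hlimm
  have hNc := hN N le_rfl
  rw [hPadd N, hQadd N] at hNc
  exact absurd hNc (not_le.mpr (hgt' N))
end

section
/- Let (X,d) be a metric space, {x_n}_{n≥0} a sequence in X with d(x_n, x_{n+1}) → 0, and m : X × X → [0,∞) a function such that for any two subsequences {x_{p_n}} and {x_{q_n}}, limsup_{n→∞} m(x_{p_n}, x_{q_n}) ≤ limsup_{n→∞} d(x_{p_n}, x_{q_n}). Suppose that for every ε > 0 there exists a positive integer ν such that for any two subsequences {x_{p_n}} and {x_{q_n}} with limsup_{n→∞} m(x_{p_n}, x_{q_n}) ≤ ε there exists N with d(x_{p_n+ν}, x_{q_n+ν}) ≤ ε for all n ≥ N. Then {x_n} is a Cauchy sequence. -/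
/-!
Suppose `x` is not Cauchy. Then there is `ε > 0` such that from every index `i` the sequence
eventually leaves the closed ball of radius `ε` about `x i`; stopping at the first exit gives
pairs `i < j` with `d(x i, x (j - 1)) ≤ ε < d(x i, x j)`. Extract strictly increasing `p`, `q` of
such pairs, all shifted forward by the `ν` belonging to `ε`. Since consecutive distances tend
to `0`, so does `d(x n, x (n + ν))`, and shifting back by `ν` costs nothing in the limit:
`limsup d(x (p n), x (q n)) ≤ ε`. Hence `limsup m(x (p n), x (q n)) ≤ ε`, and the hypothesis
yields `d(x (p n + ν), x (q n + ν)) ≤ ε` eventually, contradicting the choice of the pairs.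
-/

open Filter Topology

section

variable {X : Type*} [PseudoMetricSpace X] {x : ℕ → X}

lemma tendsto_dist_add_of_tendsto_dist_succ
    (hd : Tendsto (fun n => dist (x n) (x (n + 1))) atTop (𝓝 0)) (j : ℕ) :
    Tendsto (fun n => dist (x n) (x (n + j))) atTop (𝓝 0) := by
  induction j with
  | zero => simp
  | succ j ih =>
    have hstep := hd.comp (tendsto_add_atTop_nat j)
    refine squeeze_zero (fun _ => dist_nonneg) (fun n => ?_) (by simpa using ih.add hstep)
    exact (dist_triangle _ (x (n + j)) _).trans_eq (by rw [add_assoc])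

lemma tendsto_dist_add_add_of_tendsto_dist_succ
    (hd : Tendsto (fun n => dist (x n) (x (n + 1))) atTop (𝓝 0)) (a b : ℕ) :
    Tendsto (fun n => dist (x (n + a)) (x (n + b))) atTop (𝓝 0) :=
  squeeze_zero (fun _ => dist_nonneg) (fun n => dist_triangle_left _ _ (x n)) <| by
    simpa using (tendsto_dist_add_of_tendsto_dist_succ hd a).add
      (tendsto_dist_add_of_tendsto_dist_succ hd b)

lemma exists_forall_exists_dist_le_lt_dist_succ_of_not_cauchySeq (hx : ¬CauchySeq x) :
    ∃ ε > 0, ∀ i, ∃ k, dist (x i) (x (i + k)) ≤ ε ∧ ε < dist (x i) (x (i + k + 1)) := by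
  rw [Metric.cauchySeq_iff'] at hx
  push Not at hx
  obtain ⟨ε, hε, hfar⟩ := hx
  refine ⟨ε / 2, half_pos hε, fun i => ?_⟩
  obtain ⟨n, hin, hn⟩ := hfar i
  obtain ⟨k, hk, hk'⟩ := Nat.exists_not_and_succ_of_not_zero_of_exists
    (p := fun k => ε / 2 < dist (x i) (x (i + k))) (by simpa using (half_pos hε).le)
    ⟨n - i, by rw [Nat.add_sub_cancel' hin, dist_comm]; linarith⟩
  exact ⟨k, not_lt.mp hk, hk'⟩

end

lemma exists_strictMono_strictMono_add_of_forall_exists {P : ℕ → ℕ → Prop}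
    (h : ∀ i, ∃ k, P i k) :
    ∃ p k : ℕ → ℕ, StrictMono p ∧ StrictMono (fun n => p n + k n) ∧ ∀ n, P (p n) (k n) := by
  choose g hg using h
  set p : ℕ → ℕ := fun n => (fun i => i + g i + 1)^[n] 0
  have hp_succ (n : ℕ) : p (n + 1) = p n + g (p n) + 1 := Function.iterate_succ_apply' _ _ _
  refine ⟨p, g ∘ p, strictMono_nat_of_lt_succ fun n => ?_,
    strictMono_nat_of_lt_succ fun n => ?_, fun n => hg (p n)⟩
  · rw [hp_succ]; omega
  · simp only [Function.comp_apply, hp_succ]; omega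

lemma limsup_le_of_le_of_tendsto {α : Type*} {f : Filter α} [f.NeBot] {u v : α → ℝ} {c : ℝ}
    (hu : ∀ n, 0 ≤ u n) (huv : ∀ n, u n ≤ v n) (hv : Tendsto v f (𝓝 c)) :
    limsup u f ≤ c :=
  (limsup_le_limsup (Eventually.of_forall huv) (isCoboundedUnder_le_of_le f hu)
    hv.isBoundedUnder_le).trans_eq hv.limsup_eq

theorem stmt4_general {X : Type*} [MetricSpace X] (x : ℕ → X) (m : X → X → ℝ)
    (hm : ∀ p q : ℕ → ℕ, StrictMono p → StrictMono q →
      limsup (fun n => m (x (p n)) (x (q n))) atTop ≤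
      limsup (fun n => dist (x (p n)) (x (q n))) atTop)
    (hd : Tendsto (fun n => dist (x n) (x (n + 1))) atTop (nhds 0))
    (h : ∀ ε : ℝ, 0 < ε → ∃ ν : ℕ, 0 < ν ∧
      ∀ p q : ℕ → ℕ, StrictMono p → StrictMono q →
        limsup (fun n => m (x (p n)) (x (q n))) atTop ≤ ε →
        ∃ N : ℕ, ∀ n ≥ N, dist (x (p n + ν)) (x (q n + ν)) ≤ ε) :
    CauchySeq x := by
  by_contra hx
  obtain ⟨ε, hε, hexit⟩ := exists_forall_exists_dist_le_lt_dist_succ_of_not_cauchySeq hx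
  obtain ⟨ν, -, hν⟩ := h ε hε
  obtain ⟨p, k, hp, hpk, hpair⟩ := exists_strictMono_strictMono_add_of_forall_exists
    (P := fun i k => dist (x (i + ν)) (x (i + k + ν)) ≤ ε ∧
      ε < dist (x (i + ν)) (x (i + k + 1 + ν)))
    fun i => by simpa only [add_right_comm _ ν] using hexit (i + ν)
  set q : ℕ → ℕ := fun n => p n + k n + 1
  have hq : StrictMono q := hpk.add_const 1
  have hbound : Tendsto (fun n => dist (x (p n)) (x (p n + ν)) + ε +
      dist (x (p n + k n + ν)) (x (p n + k n + 1))) atTop (𝓝 ε) := by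
    have hstart := (tendsto_dist_add_of_tendsto_dist_succ hd ν).comp hp.tendsto_atTop
    have hend := (tendsto_dist_add_add_of_tendsto_dist_succ hd ν 1).comp hpk.tendsto_atTop
    simpa using (hstart.add_const ε).add hend
  have hlim : limsup (fun n => dist (x (p n)) (x (q n))) atTop ≤ ε :=
    limsup_le_of_le_of_tendsto (fun _ => dist_nonneg) (fun n => (dist_triangle4 _ (x (p n + ν))
      (x (p n + k n + ν)) _).trans (by gcongr; exact (hpair n).1)) hbound
  obtain ⟨N, hN⟩ := hν p q hp hq ((hm p q hp hq).trans hlim)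
  exact (hN N le_rfl).not_gt (hpair N).2

/-- Corollary 2.4 (iii). -/
theorem stmt4 {X : Type*} [MetricSpace X] (x : ℕ → X) (m : X → X → ℝ)
    (hm0 : ∀ a b : X, 0 ≤ m a b)
    (hm : ∀ p q : ℕ → ℕ, StrictMono p → StrictMono q →
      limsup (fun n => m (x (p n)) (x (q n))) atTop ≤
      limsup (fun n => dist (x (p n)) (x (q n))) atTop)
    (hd : Tendsto (fun n => dist (x n) (x (n + 1))) atTop (nhds 0))
    (h : ∀ ε : ℝ, 0 < ε → ∃ ν : ℕ, 0 < ν ∧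
      ∀ p q : ℕ → ℕ, StrictMono p → StrictMono q →
        limsup (fun n => m (x (p n)) (x (q n))) atTop ≤ ε →
        ∃ N : ℕ, ∀ n ≥ N, dist (x (p n + ν)) (x (q n + ν)) ≤ ε) :
    CauchySeq x :=
  stmt4_general x m hm hd h
end

section
/- Let (X,d) be a metric space and {x_n}_{n≥0} a sequence in X such that d(x_{p+1}, x_{q+1}) ≤ d(x_p, x_q) for all indices p, q. Then the following three statements are equivalent: (i) for any two subsequences {x_{p_n}} and {x_{q_n}} with x_{p_n} ≠ x_{q_n} for all n, if lim_{n→∞} d(x_{p_n+1}, x_{q_n+1}) / d(x_{p_n}, x_{q_n}) = 1 then d(x_{p_n}, x_{q_n}) → 0; (ii) for every ε > 0 and any two subsequences {x_{p_n}} and {x_{q_n}}, if limsup_{n→∞} d(x_{p_n}, x_{q_n}) ≤ ε then limsup_{n→∞} d(x_{p_n+1}, x_{q_n+1}) < ε; (iii) for every ε > 0 there exist δ > 0, η ∈ (0, ε), and an index N such that for all p, q ≥ N, d(x_p, x_q) < ε + δ implies d(x_{p+1}, x_{q+1}) ≤ η. -/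
/-!
Under (iii) the gaps `d(x_j, x_{j+1})` decrease to `0`, and once a gap at an index `M ≥ N` is
smaller than `ε + δ - η`, the condition traps the whole tail in the ball of radius `ε + δ` around
`x_M`; hence (iii) makes the sequence Cauchy, and a Cauchy sequence satisfies (i) and (ii)
trivially. Conversely, (ii) ⇒ (iii) by choosing, where (iii) fails, pairs of indices with
`d(x_p, x_q) < ε + t_k` and `d(x_{p+1}, x_{q+1}) > ε - t_k` for `t_k → 0`, and (i) ⇒ (ii) because a
failure of (ii) yields subsequences along which both distances tend to `ε > 0`, so that their
ratio tends to `1`.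
-/

open Filter Topology

theorem exists_strictMono_pair_of_forall_exists_ge {R : ℕ → ℕ → ℕ → Prop}
    (h : ∀ k N, ∃ a b, N ≤ a ∧ N ≤ b ∧ R k a b) :
    ∃ P Q : ℕ → ℕ, StrictMono P ∧ StrictMono Q ∧ ∀ k, R k (P k) (Q k) := by
  choose A B hA hB hR using h
  let N : ℕ → ℕ := fun k => Nat.rec 0 (fun k n => max (A k n) (B k n) + 1) k
  refine ⟨fun k => A k (N k), fun k => B k (N k), strictMono_nat_of_lt_succ fun k => ?_,
    strictMono_nat_of_lt_succ fun k => ?_, fun k => hR k (N k)⟩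
  · exact (Nat.lt_succ_of_le (le_max_left _ _)).trans_le (hA (k + 1) (N (k + 1)))
  · exact (Nat.lt_succ_of_le (le_max_right _ _)).trans_le (hB (k + 1) (N (k + 1)))

theorem tendsto_of_squeeze_pair {t u v : ℕ → ℝ} {ε : ℝ} (ht : Tendsto t atTop (𝓝 0))
    (hv : ∀ k, ε - t k < v k) (hvu : ∀ k, v k ≤ u k) (hu : ∀ k, u k < ε + t k) :
    Tendsto u atTop (𝓝 ε) ∧ Tendsto v atTop (𝓝 ε) := by
  have hlower : Tendsto (fun k => ε - t k) atTop (𝓝 ε) := by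
    simpa using tendsto_const_nhds.sub ht
  have hupper : Tendsto (fun k => ε + t k) atTop (𝓝 ε) := by
    simpa using tendsto_const_nhds.add ht
  exact ⟨tendsto_of_tendsto_of_tendsto_of_le_of_le hlower hupper
      (fun k => (hv k).le.trans (hvu k)) fun k => (hu k).le,
    tendsto_of_tendsto_of_tendsto_of_le_of_le hlower hupper
      (fun k => (hv k).le) fun k => (hvu k).trans (hu k).le⟩

theorem exists_strictMono_tendsto_of_limsup_le_le_limsup {u v : ℕ → ℝ} {ε : ℝ}
    (hvu : ∀ n, v n ≤ u n) (hu : IsBoundedUnder (· ≤ ·) atTop u)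
    (hv : IsBoundedUnder (· ≥ ·) atTop v) (hlu : limsup u atTop ≤ ε)
    (hlv : ε ≤ limsup v atTop) :
    ∃ φ : ℕ → ℕ, StrictMono φ ∧
      Tendsto (u ∘ φ) atTop (𝓝 ε) ∧ Tendsto (v ∘ φ) atTop (𝓝 ε) := by
  obtain ⟨t, -, ht, ht0⟩ := exists_seq_strictAnti_tendsto' (zero_lt_one' ℝ)
  have hfreq : ∀ k, ∃ᶠ n in atTop, ε - t k < v n ∧ u n < ε + t k := fun k =>
    (frequently_lt_of_lt_limsup hv.isCoboundedUnder_le (by linarith [(ht k).1])).and_eventually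
      (eventually_lt_of_limsup_lt (by linarith [(ht k).1]) hu)
  obtain ⟨φ, hφ, hφt⟩ := extraction_forall_of_frequently hfreq
  exact ⟨φ, hφ, tendsto_of_squeeze_pair ht0 (fun k => (hφt k).1) (fun k => hvu (φ k))
    fun k => (hφt k).2⟩

section

variable {X : Type*} [PseudoMetricSpace X]

/-- Condition (i). -/
def GeraghtyCondition (x : ℕ → X) : Prop :=
  ∀ p q : ℕ → ℕ, StrictMono p → StrictMono q → (∀ n, x (p n) ≠ x (q n)) →
    Tendsto (fun n => dist (x (p n + 1)) (x (q n + 1)) / dist (x (p n)) (x (q n)))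
      atTop (𝓝 1) →
    Tendsto (fun n => dist (x (p n)) (x (q n))) atTop (𝓝 0)

/-- Condition (ii). -/
def LimsupCondition (x : ℕ → X) : Prop :=
  ∀ ε : ℝ, 0 < ε → ∀ p q : ℕ → ℕ, StrictMono p → StrictMono q →
    limsup (fun n => dist (x (p n)) (x (q n))) atTop ≤ ε →
    limsup (fun n => dist (x (p n + 1)) (x (q n + 1))) atTop < ε

/-- Condition (iii). -/
def MeirKeelerCondition (x : ℕ → X) : Prop :=
  ∀ ε : ℝ, 0 < ε → ∃ δ : ℝ, 0 < δ ∧ ∃ η : ℝ, 0 < η ∧ η < ε ∧ ∃ N : ℕ,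
    ∀ p q : ℕ, N ≤ p → N ≤ q → dist (x p) (x q) < ε + δ → dist (x (p + 1)) (x (q + 1)) ≤ η

variable {x : ℕ → X}

theorem CauchySeq.tendsto_dist_comp (hx : CauchySeq x) {p q : ℕ → ℕ}
    (hp : Tendsto p atTop atTop) (hq : Tendsto q atTop atTop) :
    Tendsto (fun n => dist (x (p n)) (x (q n))) atTop (𝓝 0) :=
  (cauchySeq_iff_tendsto_dist_atTop_0.1 hx).comp
    (prod_atTop_atTop_eq (α := ℕ) (β := ℕ) ▸ hp.prodMk hq)

theorem CauchySeq.geraghtyCondition (hx : CauchySeq x) : GeraghtyCondition x :=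
  fun _ _ hp hq _ _ => hx.tendsto_dist_comp hp.tendsto_atTop hq.tendsto_atTop

theorem CauchySeq.limsupCondition (hx : CauchySeq x) : LimsupCondition x := by
  intro ε hε p q hp hq _
  have hd := hx.tendsto_dist_comp (p := fun n => p n + 1) (q := fun n => q n + 1)
    ((tendsto_add_atTop_nat 1).comp hp.tendsto_atTop)
    ((tendsto_add_atTop_nat 1).comp hq.tendsto_atTop)
  rwa [hd.limsup_eq]

theorem dist_lt_of_le_of_gap_add_lt {N M : ℕ} {r η : ℝ} (hr : 0 < r)
    (hN : ∀ p q, N ≤ p → N ≤ q → dist (x p) (x q) < r → dist (x (p + 1)) (x (q + 1)) ≤ η)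
    (hM : N ≤ M) (hgap : dist (x M) (x (M + 1)) + η < r) :
    ∀ n, M ≤ n → dist (x n) (x M) < r := by
  intro n hn
  induction n, hn using Nat.le_induction with
  | base => simpa using hr
  | succ n hn ih =>
    calc dist (x (n + 1)) (x M)
        ≤ dist (x (n + 1)) (x (M + 1)) + dist (x (M + 1)) (x M) := dist_triangle _ _ _
      _ ≤ η + dist (x M) (x (M + 1)) := by
        rw [dist_comm (x (M + 1))]
        exact add_le_add_left (hN n M (hM.trans hn) hM ih) _
      _ < r := by linarith

theorem antitone_dist_succ
    (hmono : ∀ p q, dist (x (p + 1)) (x (q + 1)) ≤ dist (x p) (x q)) :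
    Antitone fun j => dist (x j) (x (j + 1)) :=
  antitone_nat_of_succ_le fun j => hmono j (j + 1)

theorem isBoundedUnder_dist_of_succ
    (hmono : ∀ p q, dist (x (p + 1)) (x (q + 1)) ≤ dist (x p) (x q)) {p q : ℕ → ℕ}
    (h : IsBoundedUnder (· ≤ ·) atTop fun n => dist (x (p n + 1)) (x (q n + 1))) :
    IsBoundedUnder (· ≤ ·) atTop fun n => dist (x (p n)) (x (q n)) := by
  obtain ⟨b, hb⟩ := h
  refine ⟨b + 2 * dist (x 0) (x 1), ?_⟩
  rw [eventually_map] at hb ⊢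
  filter_upwards [hb] with n hn
  have hgp := antitone_dist_succ hmono (Nat.zero_le (p n))
  have hgq := antitone_dist_succ hmono (Nat.zero_le (q n))
  have := dist_triangle4 (x (p n)) (x (p n + 1)) (x (q n + 1)) (x (q n))
  rw [dist_comm (x (q n + 1))] at this
  simp only at hgp hgq
  linarith

theorem MeirKeelerCondition.tendsto_dist_succ
    (hmono : ∀ p q, dist (x (p + 1)) (x (q + 1)) ≤ dist (x p) (x q))
    (hC : MeirKeelerCondition x) :
    Tendsto (fun j => dist (x j) (x (j + 1))) atTop (𝓝 0) := by
  have hbdd : BddBelow (Set.range fun j => dist (x j) (x (j + 1))) :=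
    ⟨0, by rintro _ ⟨j, rfl⟩; exact dist_nonneg⟩
  obtain ⟨L, hlim⟩ : ∃ L, Tendsto (fun j => dist (x j) (x (j + 1))) atTop (𝓝 L) :=
    ⟨_, tendsto_atTop_ciInf (antitone_dist_succ hmono) hbdd⟩
  obtain rfl | hL := (ge_of_tendsto' hlim fun j => dist_nonneg).eq_or_lt
  · exact hlim
  obtain ⟨δ, hδ, η, -, hηL, N, hN⟩ := hC L hL
  obtain ⟨j, hjN, hj⟩ := ((eventually_ge_atTop N).and
    (hlim.eventually (eventually_lt_nhds (show L < L + δ by linarith)))).exists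
  linarith [hN j (j + 1) hjN (hjN.trans j.le_succ) hj,
    (antitone_dist_succ hmono).le_of_tendsto hlim (j + 1)]

theorem MeirKeelerCondition.cauchySeq
    (hmono : ∀ p q, dist (x (p + 1)) (x (q + 1)) ≤ dist (x p) (x q))
    (hC : MeirKeelerCondition x) : CauchySeq x := by
  refine Metric.cauchySeq_iff'.2 fun ε hε => ?_
  obtain ⟨δ, hδ, η, -, hηε, N, hN⟩ := hC (ε / 2) (half_pos hε)
  set r := min (ε / 2 + δ) ε
  have hr : ε / 2 < r := lt_min (by linarith) (half_lt_self hε)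
  obtain ⟨M, hNM, hM⟩ := ((eventually_ge_atTop N).and ((hC.tendsto_dist_succ hmono).eventually
    (eventually_lt_nhds (show 0 < r - η by linarith)))).exists
  have hNr : ∀ p q, N ≤ p → N ≤ q → dist (x p) (x q) < r → dist (x (p + 1)) (x (q + 1)) ≤ η :=
    fun p q hp hq hpq => hN p q hp hq (hpq.trans_le (min_le_left _ _))
  exact ⟨M, fun n hn =>
    (dist_lt_of_le_of_gap_add_lt (by linarith) hNr hNM (by linarith) n hn).trans_le
      (min_le_right _ _)⟩

theorem GeraghtyCondition.eq_zero_of_tendsto (hA : GeraghtyCondition x) {p q : ℕ → ℕ}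
    (hp : StrictMono p) (hq : StrictMono q) {L : ℝ}
    (hd : Tendsto (fun n => dist (x (p n)) (x (q n))) atTop (𝓝 L))
    (hd' : Tendsto (fun n => dist (x (p n + 1)) (x (q n + 1))) atTop (𝓝 L)) : L = 0 := by
  by_contra hL
  have hL : 0 < L := (ge_of_tendsto' hd fun n => dist_nonneg).lt_of_ne' hL
  obtain ⟨K, hK⟩ := eventually_atTop.1 (hd.eventually (lt_mem_nhds hL))
  have hshift := tendsto_add_atTop_nat K
  have hratio := (hd'.div hd hL.ne').comp hshift
  rw [div_self hL.ne'] at hratio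
  have hzero := hA (fun n => p (n + K)) (fun n => q (n + K)) (hp.comp (strictMono_id.add_const K))
    (hq.comp (strictMono_id.add_const K)) (fun n h => (hK (n + K) le_add_self).ne' (by simp [h]))
    hratio
  exact hL.ne' (tendsto_nhds_unique (hd.comp hshift) hzero)

theorem GeraghtyCondition.limsupCondition
    (hmono : ∀ p q, dist (x (p + 1)) (x (q + 1)) ≤ dist (x p) (x q))
    (hA : GeraghtyCondition x) : LimsupCondition x := by
  intro ε hε p q hp hq hlim
  by_contra! hge
  have hbdd' : IsBoundedUnder (· ≤ ·) atTop fun n => dist (x (p n + 1)) (x (q n + 1)) := by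
    by_contra h
    rw [Real.limsup_of_not_isBoundedUnder h] at hge
    linarith
  obtain ⟨φ, hφ, hd, hd'⟩ := exists_strictMono_tendsto_of_limsup_le_le_limsup
    (fun n => hmono (p n) (q n)) (isBoundedUnder_dist_of_succ hmono hbdd')
    (isBoundedUnder_of ⟨0, fun n => dist_nonneg⟩) hlim hge
  exact hε.ne' (hA.eq_zero_of_tendsto (hp.comp hφ) (hq.comp hφ) hd hd')

theorem LimsupCondition.meirKeelerCondition
    (hmono : ∀ p q, dist (x (p + 1)) (x (q + 1)) ≤ dist (x p) (x q))
    (hB : LimsupCondition x) : MeirKeelerCondition x := by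
  intro ε hε
  by_contra! hC
  obtain ⟨t, -, ht, ht0⟩ := exists_seq_strictAnti_tendsto' hε
  have hpairs : ∀ k N, ∃ a b, N ≤ a ∧ N ≤ b ∧
      ε - t k < dist (x (a + 1)) (x (b + 1)) ∧ dist (x a) (x b) < ε + t k := by
    intro k N
    obtain ⟨a, b, ha, hb, hd, hd'⟩ :=
      hC (t k) (ht k).1 (ε - t k) (by linarith [(ht k).2]) (by linarith [(ht k).1]) N
    exact ⟨a, b, ha, hb, hd', hd⟩
  obtain ⟨P, Q, hP, hQ, hPQ⟩ := exists_strictMono_pair_of_forall_exists_ge hpairs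
  obtain ⟨hd, hd'⟩ := tendsto_of_squeeze_pair ht0 (fun k => (hPQ k).1) (fun k => hmono _ _)
    fun k => (hPQ k).2
  have := hB ε hε P Q hP hQ hd.limsup_eq.le
  rw [hd'.limsup_eq] at this
  exact lt_irrefl ε this

end

/-- Proposition 3.11: equivalent formulations of Geraghty's condition. -/
theorem stmt12 {X : Type*} [MetricSpace X] (x : ℕ → X)
    (hmono : ∀ p q : ℕ, dist (x (p + 1)) (x (q + 1)) ≤ dist (x p) (x q)) :
    ((∀ p q : ℕ → ℕ, StrictMono p → StrictMono q → (∀ n, x (p n) ≠ x (q n)) →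
        Tendsto (fun n => dist (x (p n + 1)) (x (q n + 1)) / dist (x (p n)) (x (q n)))
          atTop (nhds 1) →
        Tendsto (fun n => dist (x (p n)) (x (q n))) atTop (nhds 0)) ↔
      (∀ ε : ℝ, 0 < ε → ∀ p q : ℕ → ℕ, StrictMono p → StrictMono q →
        limsup (fun n => dist (x (p n)) (x (q n))) atTop ≤ ε →
        limsup (fun n => dist (x (p n + 1)) (x (q n + 1))) atTop < ε)) ∧
    ((∀ ε : ℝ, 0 < ε → ∀ p q : ℕ → ℕ, StrictMono p → StrictMono q →
        limsup (fun n => dist (x (p n)) (x (q n))) atTop ≤ ε →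
        limsup (fun n => dist (x (p n + 1)) (x (q n + 1))) atTop < ε) ↔
      (∀ ε : ℝ, 0 < ε → ∃ δ : ℝ, 0 < δ ∧ ∃ η : ℝ, 0 < η ∧ η < ε ∧ ∃ N : ℕ,
        ∀ p q : ℕ, N ≤ p → N ≤ q → dist (x p) (x q) < ε + δ →
          dist (x (p + 1)) (x (q + 1)) ≤ η)) := by
  have hBC : LimsupCondition x → MeirKeelerCondition x :=
    LimsupCondition.meirKeelerCondition hmono
  have hCauchy : MeirKeelerCondition x → CauchySeq x :=
    MeirKeelerCondition.cauchySeq hmono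
  exact ⟨⟨GeraghtyCondition.limsupCondition hmono, fun hB => (hCauchy (hBC hB)).geraghtyCondition⟩,
    hBC, fun hC => (hCauchy hC).limsupCondition⟩
end

section
/- Let (X,d) be a complete metric space and T : X → X a contractive map, i.e., d(Tx, Ty) < d(x,y) for all x, y ∈ X with x ≠ y. Fix x ∈ X and set x_n = T^n x. If for any two subsequences {x_{p_n}} and {x_{q_n}} with x_{p_n} ≠ x_{q_n} for all n, the condition lim_{n→∞} d(T x_{p_n}, T x_{q_n}) / d(x_{p_n}, x_{q_n}) = 1 implies d(x_{p_n}, x_{q_n}) → 0, then the sequence {x_n} converges to a fixed point of T, and this fixed point is the unique fixed point of T. -/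
open Filter

/-- Geraghty's theorem (the "if" direction). -/
theorem stmt19 {X : Type*} [MetricSpace X] [CompleteSpace X] (T : X → X)
    (hT : ∀ x y : X, x ≠ y → dist (T x) (T y) < dist x y)
    (x : X)
    (hG : ∀ p q : ℕ → ℕ, StrictMono p → StrictMono q →
        (∀ n, T^[p n] x ≠ T^[q n] x) →
        Tendsto (fun n => dist (T (T^[p n] x)) (T (T^[q n] x)) /
          dist (T^[p n] x) (T^[q n] x)) atTop (nhds 1) →
        Tendsto (fun n => dist (T^[p n] x) (T^[q n] x)) atTop (nhds 0)) :
    ∃ z : X, T z = z ∧ (∀ y : X, T y = y → y = z) ∧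
      Tendsto (fun n => T^[n] x) atTop (nhds z) := by
  classical
  have hle : ∀ a b : X, dist (T a) (T b) ≤ dist a b := by
    intro a b
    rcases eq_or_ne a b with rfl | h
    · simp
    · exact (hT a b h).le
  have huniq : ∀ z : X, T z = z → ∀ y : X, T y = y → y = z := by
    intro z hz y hy
    by_contra h
    have := hT y z h
    rw [hy, hz] at this
    exact absurd this (lt_irrefl _)
  by_cases hdeg : ∃ n, T^[n + 1] x = T^[n] x
  · obtain ⟨n₀, hn₀⟩ := hdeg
    have hfix : T (T^[n₀] x) = T^[n₀] x := by
      rw [← Function.iterate_succ_apply' T n₀ x]; exact hn₀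
    refine ⟨T^[n₀] x, hfix, huniq _ hfix, ?_⟩
    have hev : ∀ k, n₀ ≤ k → T^[k] x = T^[n₀] x := by
      intro k hk
      induction k, hk using Nat.le_induction with
      | base => rfl
      | succ k hk ih => rw [Function.iterate_succ_apply', ih, hfix]
    have : ∀ᶠ k in atTop, T^[n₀] x = T^[k] x :=
      eventually_atTop.2 ⟨n₀, fun k hk => (hev k hk).symm⟩
    exact (tendsto_const_nhds : Tendsto _ atTop (nhds (T^[n₀] x))).congr' this
  push_neg at hdeg
  set u : ℕ → X := fun n => T^[n] x with hu
  have hTu : ∀ n, T (u n) = u (n + 1) := fun n =>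
    (Function.iterate_succ_apply' T n x).symm
  set d : ℕ → ℝ := fun n => dist (u (n + 1)) (u n) with hd
  have hdpos : ∀ n, 0 < d n := fun n => dist_pos.2 (hdeg n)
  have hdlt : ∀ n, d (n + 1) < d n := by
    intro n
    have : dist (T (u (n + 1))) (T (u n)) < dist (u (n + 1)) (u n) :=
      hT _ _ (hdeg n)
    simpa [hTu] using this
  have hanti : StrictAnti d := strictAnti_nat_of_succ_lt hdlt
  have hbdd : BddBelow (Set.range d) := ⟨0, by rintro _ ⟨n, rfl⟩; exact dist_nonneg⟩
  have htend : Tendsto d atTop (nhds (⨅ n, d n)) :=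
    tendsto_atTop_ciInf hanti.antitone hbdd
  have hd0 : Tendsto d atTop (nhds 0) := by
    rcases eq_or_lt_of_le (le_ciInf fun n => (dist_nonneg : (0:ℝ) ≤ d n)) with h | h
    · rwa [← h] at htend
    · exfalso
      have hne' : ∀ n, T^[id n] x ≠ T^[Nat.succ n] x := fun n => (hdeg n).symm
      have hratio : Tendsto (fun n => dist (T (T^[id n] x)) (T (T^[Nat.succ n] x)) /
          dist (T^[id n] x) (T^[Nat.succ n] x)) atTop (nhds 1) := by
        have h1 : Tendsto (fun n => d (n + 1) / d n) atTop (nhds ((⨅ n, d n) / (⨅ n, d n))) :=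
          (htend.comp (tendsto_add_atTop_nat 1)).div htend h.ne'
        rw [div_self h.ne'] at h1
        refine h1.congr fun n => ?_
        have e1 : dist (T (T^[id n] x)) (T (T^[Nat.succ n] x)) = d (n + 1) := by
          simp only [id, Nat.succ_eq_add_one]
          rw [show (T^[n] x) = u n from rfl, show (T^[n+1] x) = u (n+1) from rfl,
            hTu, hTu, dist_comm]
        have e2 : dist (T^[id n] x) (T^[Nat.succ n] x) = d n := by
          simp only [id, Nat.succ_eq_add_one]
          exact dist_comm _ _
        rw [e1, e2]
      have hlim0 := hG id Nat.succ strictMono_id (fun a b h => Nat.succ_lt_succ h)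
        hne' hratio
      have : Tendsto d atTop (nhds 0) := by
        refine hlim0.congr fun n => ?_
        simp only [id, Nat.succ_eq_add_one]
        exact dist_comm _ _
      exact absurd (tendsto_nhds_unique htend this) h.ne'
  -- Cauchy
  have hcauchy : CauchySeq u := by
    by_contra hC
    rw [Metric.cauchySeq_iff] at hC
    push_neg at hC
    obtain ⟨ε, hε, hcc⟩ := hC
    have H : ∀ N, ∃ m n, N ≤ n ∧ n < m ∧ ε ≤ dist (u m) (u n) := by
      intro N
      obtain ⟨a, ha, b, hb, hab⟩ := hcc N
      rcases lt_trichotomy a b with h | h | h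
      · exact ⟨b, a, ha, h, by rwa [dist_comm]⟩
      · exfalso; rw [h] at hab; simp at hab; linarith
      · exact ⟨a, b, hb, h, hab⟩
    have key : ∀ N, ∃ p : ℕ × ℕ, N ≤ p.2 ∧ p.2 < p.1 ∧ ε ≤ dist (u p.1) (u p.2) ∧
        ∀ j, p.2 < j → j < p.1 → dist (u j) (u p.2) < ε := by
      intro N
      obtain ⟨m, n, hn, hnm, hdm⟩ := H N
      have hex : ∃ m', n < m' ∧ ε ≤ dist (u m') (u n) := ⟨m, hnm, hdm⟩
      refine ⟨(Nat.find hex, n), hn, (Nat.find_spec hex).1, (Nat.find_spec hex).2, ?_⟩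
      intro j hj1 hj2
      have := Nat.find_min hex hj2
      push_neg at this
      exact this hj1
    set g : ℕ → ℕ × ℕ := fun k =>
      Nat.rec (key 0).choose (fun _ ih => (key (ih.1 + 1)).choose) k with hg
    set m : ℕ → ℕ := fun k => (g k).1 with hm
    set n : ℕ → ℕ := fun k => (g k).2 with hn
    have hspec0 := (key 0).choose_spec
    have hspecs : ∀ k, m k + 1 ≤ n (k + 1) ∧ n (k + 1) < m (k + 1) ∧
        ε ≤ dist (u (m (k + 1))) (u (n (k + 1))) ∧
        ∀ j, n (k + 1) < j → j < m (k + 1) → dist (u j) (u (n (k + 1))) < ε := by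
      intro k
      exact (key (m k + 1)).choose_spec
    have hmn : ∀ k, n k < m k := by
      intro k
      cases k with
      | zero => exact hspec0.2.1
      | succ k => exact (hspecs k).2.1
    have hεd : ∀ k, ε ≤ dist (u (m k)) (u (n k)) := by
      intro k
      cases k with
      | zero => exact hspec0.2.2.1
      | succ k => exact (hspecs k).2.2.1
    have hmin : ∀ k j, n k < j → j < m k → dist (u j) (u (n k)) < ε := by
      intro k
      cases k with
      | zero => exact hspec0.2.2.2
      | succ k => exact (hspecs k).2.2.2
    have hmmono : StrictMono m := by
      apply strictMono_nat_of_lt_succ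
      intro k
      have h1 := (hspecs k).1
      have h2 := hmn (k + 1)
      omega
    have hnmono : StrictMono n := by
      apply strictMono_nat_of_lt_succ
      intro k
      have h1 := (hspecs k).1
      have h2 := hmn k
      omega
    set a : ℕ → ℝ := fun k => dist (u (m k)) (u (n k)) with ha
    set b : ℕ → ℝ := fun k => dist (u (m k + 1)) (u (n k + 1)) with hb
    have hmk1 : ∀ k, m k - 1 + 1 = m k := by
      intro k; have := hmn k; omega
    have hprev : ∀ k, dist (u (m k - 1)) (u (n k)) < ε := by
      intro k
      rcases eq_or_lt_of_le (show n k ≤ m k - 1 by have := hmn k; omega) with h | h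
      · rw [← h]; simpa using hε
      · exact hmin k _ h (by have := hmn k; omega)
    have haub : ∀ k, a k ≤ ε + d (m k - 1) := by
      intro k
      have h1 : a k ≤ dist (u (m k)) (u (m k - 1)) + dist (u (m k - 1)) (u (n k)) :=
        dist_triangle _ _ _
      have h2 : dist (u (m k)) (u (m k - 1)) = d (m k - 1) := by
        simp only [hd]; rw [hmk1 k]
      linarith [hprev k, h1, h2.le, h2.ge]
    have hmtop : Tendsto (fun k => m k - 1) atTop atTop := by
      apply tendsto_atTop_mono _ tendsto_id
      intro k
      have h1 : k ≤ n k := hnmono.le_apply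
      have h2 := hmn k
      simp only [id_eq]
      omega
    have hatend : Tendsto a atTop (nhds ε) := by
      have hup : Tendsto (fun k => ε + d (m k - 1)) atTop (nhds (ε + 0)) :=
        tendsto_const_nhds.add (hd0.comp hmtop)
      rw [add_zero] at hup
      exact tendsto_of_tendsto_of_tendsto_of_le_of_le tendsto_const_nhds hup hεd haub
    have hdm : Tendsto (fun k => d (m k)) atTop (nhds 0) :=
      hd0.comp (hmmono.tendsto_atTop)
    have hdn : Tendsto (fun k => d (n k)) atTop (nhds 0) :=
      hd0.comp (hnmono.tendsto_atTop)
    have hbub : ∀ k, b k ≤ a k := by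
      intro k
      have : dist (T (u (m k))) (T (u (n k))) ≤ a k := hle _ _
      simpa [hTu] using this
    have hblb : ∀ k, a k - d (m k) - d (n k) ≤ b k := by
      intro k
      have h1 : a k ≤ dist (u (m k)) (u (m k + 1)) + dist (u (m k + 1)) (u (n k + 1)) +
          dist (u (n k + 1)) (u (n k)) :=
        dist_triangle4 _ _ _ _
      have h2 : dist (u (m k)) (u (m k + 1)) = d (m k) := dist_comm _ _
      have h3 : dist (u (n k + 1)) (u (n k)) = d (n k) := rfl
      rw [h2, h3] at h1
      linarith
    have hbtend : Tendsto b atTop (nhds ε) := by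
      have hlow : Tendsto (fun k => a k - d (m k) - d (n k)) atTop (nhds (ε - 0 - 0)) :=
        (hatend.sub hdm).sub hdn
      rw [sub_zero, sub_zero] at hlow
      exact tendsto_of_tendsto_of_tendsto_of_le_of_le hlow hatend hblb hbub
    have hne2 : ∀ k, T^[m k] x ≠ T^[n k] x := by
      intro k h
      have : a k = 0 := by rw [ha]; simp [u, h]
      linarith [hεd k]
    have hratio : Tendsto (fun k => dist (T (T^[m k] x)) (T (T^[n k] x)) /
        dist (T^[m k] x) (T^[n k] x)) atTop (nhds 1) := by
      have h1 : Tendsto (fun k => b k / a k) atTop (nhds (ε / ε)) :=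
        hbtend.div hatend hε.ne'
      rw [div_self hε.ne'] at h1
      refine h1.congr fun k => ?_
      have e1 : dist (T (T^[m k] x)) (T (T^[n k] x)) = b k := by
        rw [show (T^[m k] x) = u (m k) from rfl, show (T^[n k] x) = u (n k) from rfl,
          hTu, hTu]
      rw [e1]
    have hconc := hG m n hmmono hnmono hne2 hratio
    have : Tendsto a atTop (nhds 0) := hconc
    have := tendsto_nhds_unique hatend this
    linarith
  obtain ⟨z, hz⟩ := cauchySeq_tendsto_of_complete hcauchy
  have hcont : Continuous T :=
    (LipschitzWith.of_dist_le_mul (K := 1) (by simpa using hle)).continuous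
  have h1 : Tendsto (fun k => T (u k)) atTop (nhds (T z)) :=
    (hcont.tendsto z).comp hz
  have h2 : Tendsto (fun k => T (u k)) atTop (nhds z) := by
    have := hz.comp (tendsto_add_atTop_nat 1)
    exact this.congr fun k => (hTu k).symm
  have hfix : T z = z := tendsto_nhds_unique h1 h2
  exact ⟨z, hfix, huniq z hfix, hz⟩
end
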